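/- Let A be a skew left brace and define its socle Soc(A) = {a ∈ A : a∘b = a·b and b·(b∘a) = (b∘a)·b for all b ∈ A}. Then Soc(A) is an ideal of A (a normal subgroup of (A,∘) with Soc(A)·a = a·Soc(A) and λ_a(Soc(A)) ⊆ Soc(A) for all a ∈ A) and Soc(A) is contained in the center of the group (A,·). -/

import Mathlib

/-!
The identities of `(A, ·)` and `(A, ∘)` coincide. Writing `b̄` for the `∘`-inverse of `b`,
the brace identity gives `b ∘ (b̄ · a) = b⁻¹ · (b ∘ a)` and `b ∘ (a · b̄) = (b ∘ a) · b⁻¹`;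
since `b ∘ -` is injective, `b̄` commutes with `a` iff `b` commutes with `b ∘ a`. So the second
socle condition says exactly that `a` is central in `(A, ·)`. Each `λ_a` is a bijective
endomorphism of `(A, ·)`, hence preserves the centre, and for `x` in the socle the
`∘`-conjugate `(a ∘ x) ∘ ā` equals `λ_a(x)`.
-/

/-- A skew left brace structure on a group `(A, ·)`: a second group structure
`(a, b) ↦ circ a b` (with identity `circOne` and inverse `circInv`) satisfying
`a ∘ (b · c) = (a ∘ b) · a⁻¹ · (a ∘ c)`. -/
structure SkewLeftBrace (A : Type*) [Group A] where
  circ : A → A → A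
  circ_assoc : ∀ a b c : A, circ (circ a b) c = circ a (circ b c)
  circOne : A
  circOne_circ : ∀ a : A, circ circOne a = a
  circ_circOne : ∀ a : A, circ a circOne = a
  circInv : A → A
  circInv_circ : ∀ a : A, circ (circInv a) a = circOne
  circ_circInv : ∀ a : A, circ a (circInv a) = circOne
  circ_mul : ∀ a b c : A, circ a (b * c) = circ a b * a⁻¹ * circ a c

namespace SkewLeftBrace

variable {A : Type*} [Group A] (S : SkewLeftBrace A)

theorem circ_one (a : A) : S.circ a 1 = a := by
  have h := S.circ_mul a 1 1
  rw [one_mul, mul_assoc, left_eq_mul, inv_mul_eq_one] at h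
  exact h.symm

theorem circOne_eq_one : S.circOne = 1 :=
  (S.circ_one S.circOne).symm.trans (S.circOne_circ 1)

theorem one_circ (a : A) : S.circ 1 a = a := by
  rw [← S.circOne_eq_one, S.circOne_circ]

theorem circ_circInv_eq_one (a : A) : S.circ a (S.circInv a) = 1 :=
  (S.circ_circInv a).trans S.circOne_eq_one

theorem circ_right_injective (a : A) : Function.Injective (S.circ a) := fun b c h => by
  simpa only [← S.circ_assoc, S.circInv_circ, S.circOne_circ] using
    congrArg (S.circ (S.circInv a)) h

theorem circInv_involutive : Function.Involutive S.circInv := fun a =>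
  S.circ_right_injective (S.circInv a) <| by
    rw [S.circ_circInv_eq_one, ← S.circOne_eq_one, S.circInv_circ]

theorem circ_inv (a b : A) : S.circ a b⁻¹ = a * (S.circ a b)⁻¹ * a := by
  have h := S.circ_mul a b b⁻¹
  rw [mul_inv_cancel, S.circ_one] at h
  rw [eq_inv_mul_of_mul_eq h.symm, mul_inv_rev, inv_inv]

theorem commute_circInv_iff (a b : A) :
    Commute (S.circInv b) a ↔ Commute b (S.circ b a) := by
  have h₁ : S.circ b (S.circInv b * a) = b⁻¹ * S.circ b a := by
    rw [S.circ_mul, S.circ_circInv_eq_one, one_mul]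
  have h₂ : S.circ b (a * S.circInv b) = S.circ b a * b⁻¹ := by
    rw [S.circ_mul, S.circ_circInv_eq_one, mul_one]
  rw [← Commute.inv_left_iff (a := b)]
  unfold Commute SemiconjBy
  rw [← h₁, ← h₂, (S.circ_right_injective b).eq_iff]

theorem forall_commute_circ_iff (a : A) :
    (∀ b, Commute b (S.circ b a)) ↔ ∀ b, Commute a b := by
  simp only [← S.commute_circInv_iff, ← S.circInv_involutive.surjective.forall,
    Commute.symm_iff]

def lam (a b : A) : A := a⁻¹ * S.circ a b

theorem lam_mul (a b c : A) : S.lam a (b * c) = S.lam a b * S.lam a c := by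
  simp only [lam, S.circ_mul]
  group

theorem lam_circ (a b c : A) : S.lam (S.circ a b) c = S.lam a (S.lam b c) := by
  simp only [lam]
  rw [S.circ_mul, S.circ_inv, ← S.circ_assoc]
  group

theorem lam_surjective (a : A) : Function.Surjective (S.lam a) := fun y =>
  ⟨S.lam (S.circInv a) y, by rw [← lam_circ, S.circ_circInv_eq_one, lam, S.one_circ, inv_one,
    one_mul]⟩

theorem commute_lam {x : A} (hx : ∀ b, Commute x b) (a y : A) : Commute (S.lam a x) y := by
  obtain ⟨z, rfl⟩ := S.lam_surjective a y
  show S.lam a x * S.lam a z = S.lam a z * S.lam a x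
  rw [← lam_mul, ← lam_mul, (hx z).eq]

theorem circ_circ_circInv_circ {x : A} (hx : ∀ b, S.circ x b = x * b) (a b : A) :
    S.circ (S.circ (S.circ a x) (S.circInv a)) b = S.circ a x * a⁻¹ * b := by
  rw [S.circ_assoc, S.circ_assoc, hx, S.circ_mul, ← S.circ_assoc, S.circ_circInv,
    S.circOne_circ]

theorem circ_mul_inv_eq_lam {a x : A} (h : Commute (S.lam a x) a) :
    S.circ a x * a⁻¹ = S.lam a x := by
  have hax : S.circ a x = a * S.lam a x := by rw [lam, mul_inv_cancel_left]
  rw [hax, ← h.eq, mul_inv_cancel_right]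

theorem circInv_eq_inv {x : A} (hx : ∀ b, S.circ x b = x * b) : S.circInv x = x⁻¹ :=
  S.circ_right_injective x <| by rw [S.circ_circInv_eq_one, hx, mul_inv_cancel]

def socle : Set A :=
  {a | (∀ b, S.circ a b = a * b) ∧ ∀ b, b * S.circ b a = S.circ b a * b}

variable {S}

theorem mem_socle_iff {a : A} :
    a ∈ S.socle ↔ (∀ b, S.circ a b = a * b) ∧ ∀ b, Commute a b :=
  and_congr_right' (S.forall_commute_circ_iff a)

theorem commute_of_mem_socle {x : A} (hx : x ∈ S.socle) (b : A) : Commute x b :=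
  (mem_socle_iff.1 hx).2 b

theorem one_mem_socle : (1 : A) ∈ S.socle :=
  mem_socle_iff.2 ⟨fun b => by rw [S.one_circ, one_mul], Commute.one_left⟩

theorem circ_mem_socle {x y : A} (hx : x ∈ S.socle) (hy : y ∈ S.socle) :
    S.circ x y ∈ S.socle := by
  obtain ⟨hxc, hxz⟩ := mem_socle_iff.1 hx
  obtain ⟨hyc, hyz⟩ := mem_socle_iff.1 hy
  refine mem_socle_iff.2 ⟨fun b => ?_, fun b => ?_⟩
  · rw [S.circ_assoc, hyc, hxc, hxc, mul_assoc]
  · rw [hxc]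
    exact (hxz b).mul_left (hyz b)

theorem circInv_mem_socle {x : A} (hx : x ∈ S.socle) : S.circInv x ∈ S.socle := by
  obtain ⟨hxc, hxz⟩ := mem_socle_iff.1 hx
  rw [S.circInv_eq_inv hxc]
  refine mem_socle_iff.2 ⟨fun b => S.circ_right_injective x ?_, fun b => (hxz b).inv_left⟩
  rw [← S.circ_assoc, hxc x⁻¹, mul_inv_cancel, S.one_circ, hxc, mul_inv_cancel_left]

theorem circ_circ_circInv_eq_lam {x : A} (hx : x ∈ S.socle) (a : A) :
    S.circ (S.circ (S.circ a x) (S.circInv a)) = (S.lam a x * ·) := by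
  obtain ⟨hxc, hxz⟩ := mem_socle_iff.1 hx
  funext b
  rw [S.circ_circ_circInv_circ hxc, S.circ_mul_inv_eq_lam (S.commute_lam hxz a a)]

theorem circ_circInv_eq_lam {x : A} (hx : x ∈ S.socle) (a : A) :
    S.circ (S.circ a x) (S.circInv a) = S.lam a x := by
  simpa only [S.circ_one, mul_one] using congrFun (circ_circ_circInv_eq_lam hx a) 1

theorem lam_mem_socle {x : A} (hx : x ∈ S.socle) (a : A) : S.lam a x ∈ S.socle := by
  have h := circ_circ_circInv_eq_lam hx a
  rw [circ_circInv_eq_lam hx a] at h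
  exact mem_socle_iff.2 ⟨congrFun h, S.commute_lam (mem_socle_iff.1 hx).2 a⟩

theorem circ_circInv_mem_socle {x : A} (hx : x ∈ S.socle) (a : A) :
    S.circ (S.circ a x) (S.circInv a) ∈ S.socle := by
  rw [circ_circInv_eq_lam hx]
  exact lam_mem_socle hx a

end SkewLeftBrace

open SkewLeftBrace in
/-- The socle `Soc(A) = {a : a ∘ b = a · b and b · (b ∘ a) = (b ∘ a) · b for all b}` of a
skew left brace `A` is an ideal of `A` (a normal subgroup of `(A, ∘)` with matching cosets
in `(A, ·)` and invariant under all `λ_a`), contained in the center of `(A, ·)`. -/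
theorem skewLeftBrace_socle_ideal_central {A : Type*} [Group A] (S : SkewLeftBrace A)
    (Soc : Set A)
    (hSoc : Soc = {a : A | (∀ b : A, S.circ a b = a * b) ∧
      ∀ b : A, b * S.circ b a = S.circ b a * b}) :
    S.circOne ∈ Soc ∧
    (∀ x ∈ Soc, ∀ y ∈ Soc, S.circ x y ∈ Soc) ∧
    (∀ x ∈ Soc, S.circInv x ∈ Soc) ∧
    (∀ a : A, ∀ x ∈ Soc, S.circ (S.circ a x) (S.circInv a) ∈ Soc) ∧
    (∀ a : A, (fun x => x * a) '' Soc = (fun x => a * x) '' Soc) ∧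
    (∀ a : A, ∀ x ∈ Soc, a⁻¹ * S.circ a x ∈ Soc) ∧
    (∀ x ∈ Soc, ∀ b : A, x * b = b * x) := by
  change Soc = S.socle at hSoc
  subst hSoc
  refine ⟨S.circOne_eq_one ▸ one_mem_socle, fun x hx y hy => circ_mem_socle hx hy,
    fun x hx => circInv_mem_socle hx, fun a x hx => circ_circInv_mem_socle hx a,
    fun a => Set.image_congr fun x hx => (commute_of_mem_socle hx a).eq,
    fun a x hx => lam_mem_socle hx a, fun x hx b => (commute_of_mem_socle hx b).eq⟩
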